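/- arXiv:2404.07609 — 2 statements merged into one kernel-verified Lean document; each statement's English description precedes it below -/
import Mathlib

section
/- Let P be an n×n symmetric doubly stochastic matrix with connected graph and positive diagonal, E ∈ ℝ^{n×d}, g ∈ ℝ^n. Then x ∈ ℝ^d satisfies 1ᵀ(Ex + g) = 0 if and only if there exists y ∈ ℝ^n with Ex + (I−P)y + g = 0. -/
/-!
A doubly stochastic `P` has `1ᵀ(I - P) = 0`, so the range of `I - P` lies in the hyperplane
`{z : 1ᵀz = 0}`. By the maximum principle a `P`-harmonic vector (`Pz = z`) is constant along every
edge of the connected graph of `P`, so the kernel of `I - P` is spanned by `1`, and by rank–nullity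
the range of `I - P` is the whole hyperplane.
-/

open Matrix Finset

/-- The undirected graph associated with a nonnegative matrix `P`. -/
def assocGraph {n : ℕ} (P : Matrix (Fin n) (Fin n) ℝ) : SimpleGraph (Fin n) where
  Adj i j := i ≠ j ∧ (0 < P i j ∨ 0 < P j i)
  symm := by constructor; intro i j h; exact ⟨h.1.symm, h.2.symm⟩
  loopless := by constructor; intro i h; exact h.1 rfl

theorem SimpleGraph.Reachable.mem_of_forall_adj {V : Type*} {G : SimpleGraph V} {s : Set V}
    (hs : ∀ u v, G.Adj u v → u ∈ s → v ∈ s) {u v : V} (h : G.Reachable u v) (hu : u ∈ s) :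
    v ∈ s := by
  obtain ⟨w⟩ := h
  induction w with
  | nil => exact hu
  | cons hadj _ ih => exact ih (hs _ _ hadj hu)

namespace Matrix

variable {ι : Type*} [Fintype ι] {P : Matrix ι ι ℝ}

theorem apply_eq_of_mulVec_apply_eq_of_forall_le (hnonneg : ∀ i j, 0 ≤ P i j) {i : ι}
    (hrow : ∑ j, P i j = 1) {z : ι → ℝ} (hmax : ∀ k, z k ≤ z i) (hz : (P *ᵥ z) i = z i)
    {j : ι} (hij : 0 < P i j) : z j = z i := by
  by_contra hne
  have hlt : ∑ k, P i k * z k < ∑ k, P i k * z i :=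
    sum_lt_sum (fun k _ => mul_le_mul_of_nonneg_left (hmax k) (hnonneg i k))
      ⟨j, mem_univ j, mul_lt_mul_of_pos_left (lt_of_le_of_ne (hmax j) hne) hij⟩
  rw [← sum_mul, hrow, one_mul] at hlt
  exact hlt.ne hz

theorem apply_eq_of_mulVec_eq_self {G : SimpleGraph ι} (hG : G.Connected)
    (hadj : ∀ i j, G.Adj i j → 0 < P i j) (hnonneg : ∀ i j, 0 ≤ P i j)
    (hrow : ∀ i, ∑ j, P i j = 1) {z : ι → ℝ} (hz : P *ᵥ z = z) (i j : ι) : z i = z j := by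
  have := hG.nonempty
  obtain ⟨i₀, hi₀⟩ := Finite.exists_max z
  have hmax : ∀ k, z k = z i₀ := fun k =>
    (hG.preconnected i₀ k).mem_of_forall_adj (s := {k | z k = z i₀})
      (fun u v huv (hu : z u = z i₀) => (apply_eq_of_mulVec_apply_eq_of_forall_le hnonneg (hrow u)
        (hu ▸ hi₀) (congrFun hz u) (hadj u v huv)).trans hu) rfl
  rw [hmax i, hmax j]

variable [DecidableEq ι]

theorem ker_mulVecLin_one_sub {G : SimpleGraph ι} (hG : G.Connected)
    (hadj : ∀ i j, G.Adj i j → 0 < P i j) (hnonneg : ∀ i j, 0 ≤ P i j)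
    (hrow : ∀ i, ∑ j, P i j = 1) : LinearMap.ker (1 - P).mulVecLin = ℝ ∙ 1 := by
  have hP1 : P *ᵥ 1 = 1 := by
    ext i
    simp [mulVec, dotProduct_one, hrow i]
  ext z
  rw [LinearMap.mem_ker, mulVecLin_apply, sub_mulVec, one_mulVec, sub_eq_zero,
    Submodule.mem_span_singleton]
  constructor
  · intro hz
    obtain ⟨i₀⟩ := hG.nonempty
    refine ⟨z i₀, funext fun i => ?_⟩
    simpa using apply_eq_of_mulVec_eq_self hG hadj hnonneg hrow hz.symm i₀ i
  · rintro ⟨c, rfl⟩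
    rw [mulVec_smul, hP1]

theorem one_dotProduct_mulVec_one_sub (hsymm : P.IsSymm) (hrow : ∀ i, ∑ j, P i j = 1)
    (y : ι → ℝ) : 1 ⬝ᵥ (1 - P) *ᵥ y = 0 := by
  have h1P : 1 ᵥ* P = 1 := by
    rw [← hsymm.eq, vecMul_transpose]
    ext i
    simp [mulVec, dotProduct_one, hrow i]
  rw [dotProduct_mulVec, vecMul_sub, vecMul_one, h1P, sub_self, zero_dotProduct]

theorem exists_mulVec_one_sub_eq_iff {G : SimpleGraph ι} (hG : G.Connected)
    (hadj : ∀ i j, G.Adj i j → 0 < P i j) (hsymm : P.IsSymm) (hnonneg : ∀ i j, 0 ≤ P i j)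
    (hrow : ∀ i, ∑ j, P i j = 1) {z : ι → ℝ} :
    (∃ y, (1 - P) *ᵥ y = z) ↔ ∑ i, z i = 0 := by
  have := hG.nonempty
  let sumFunctional := dotProductEquiv ℝ ι 1
  have hsum : ∀ v, sumFunctional v = ∑ i, v i := one_dotProduct
  have hrange : LinearMap.range (1 - P).mulVecLin ≤ LinearMap.ker sumFunctional := by
    rintro _ ⟨y, rfl⟩
    exact one_dotProduct_mulVec_one_sub hsymm hrow y
  have hne : sumFunctional ≠ 0 := (dotProductEquiv ℝ ι).map_ne_zero_iff.mpr one_ne_zero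
  have hdim := LinearMap.finrank_range_add_finrank_ker (1 - P).mulVecLin
  rw [ker_mulVecLin_one_sub hG hadj hnonneg hrow, finrank_span_singleton one_ne_zero,
    ← Module.Dual.finrank_ker_add_one_of_ne_zero hne] at hdim
  rw [← hsum, ← LinearMap.mem_ker, ← Submodule.eq_of_le_of_finrank_eq hrange (by omega)]
  rfl

end Matrix

theorem equality_constraint_reformulation_general
    {n d : ℕ} (P : Matrix (Fin n) (Fin n) ℝ)
    (hsymm : P.IsSymm)
    (hnonneg : ∀ i j, 0 ≤ P i j)
    (hrow : ∀ i, ∑ j, P i j = 1)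
    (hconn : (assocGraph P).Connected)
    (E : Matrix (Fin n) (Fin d) ℝ) (g : Fin n → ℝ)
    (x : Fin d → ℝ) :
    ∑ i, (E.mulVec x i + g i) = 0 ↔
      ∃ y : Fin n → ℝ, ∀ i, E.mulVec x i + (1 - P).mulVec y i + g i = 0 := by
  have hadj : ∀ i j, (assocGraph P).Adj i j → 0 < P i j := fun i j h =>
    h.2.elim id fun hji => hsymm.apply i j ▸ hji
  have hrange := exists_mulVec_one_sub_eq_iff hconn hadj hsymm hnonneg hrow
    (z := -(E *ᵥ x + g))
  simp only [Pi.neg_apply, Pi.add_apply, sum_neg_distrib, neg_eq_zero, funext_iff] at hrange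
  rw [← hrange]
  refine exists_congr fun y => forall_congr' fun i => ?_
  constructor <;> intro h <;> linarith

theorem equality_constraint_reformulation
    {n d : ℕ} (P : Matrix (Fin n) (Fin n) ℝ)
    (hsymm : P.IsSymm)
    (hnonneg : ∀ i j, 0 ≤ P i j)
    (hrow : ∀ i, ∑ j, P i j = 1)
    (hdiag : ∀ i, 0 < P i i)
    (hconn : (assocGraph P).Connected)
    (E : Matrix (Fin n) (Fin d) ℝ) (g : Fin n → ℝ)
    (x : Fin d → ℝ) :
    ∑ i, (E.mulVec x i + g i) = 0 ↔
      ∃ y : Fin n → ℝ, ∀ i, E.mulVec x i + (1 - P).mulVec y i + g i = 0 :=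
  equality_constraint_reformulation_general P hsymm hnonneg hrow hconn E g x
end

section
/- Let φ : ℝ^n → ℝ be convex and differentiable with L-Lipschitz gradient, and let y* minimize φ. The accelerated dual averaging iteration with weights γ_t = γ(t+1), Γ_t = Σ_{τ=1}^t γ_τ, and γ ≤ 1/(2L), produces iterates ŷ^{(t)} satisfying φ(ŷ^{(t)}) − φ(y*) ≤ ‖y^{(0)} − y*‖²/(2Γ_t) = 2L‖y^{(0)} − y*‖²/(t(t+3)) for all t ≥ 2, when γ = 1/(2L). -/
/-!
The proof is a Lyapunov argument: with `Γ_t = γ t (t + 3) / 2` the energy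
`Γ_t (φ ŷ_t - φ y⋆) + ‖z_t - y⋆‖² / 2` does not increase. In one step, `Γ_t y_t` splits as
`(Γ_t - γ_t) ŷ_{t-1} + γ_t z_{t-1}`, so the gradient inequalities of convexity at `y_t`
(against `ŷ_{t-1}` and `y⋆`) produce the term `γ_t ⟪∇φ y_t, z_{t-1} - y⋆⟫`, which cancels against
the expansion of `‖z_t - y⋆‖²`. What remains is `γ_t² ‖∇φ y_t‖² / 2`, paid for by the descent
lemma, because `ŷ_t = y_t - (γ_t² / Γ_t) ∇φ y_t` is a gradient step of length at most `1 / L`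
exactly when `L γ_t² ≤ Γ_t`, which `γ ≤ 1 / (2L)` guarantees.
-/

open Set
open scoped RealInnerProductSpace

section GradientInequalities

variable {E : Type*} [NormedAddCommGroup E] [InnerProductSpace ℝ E] [CompleteSpace E]

theorem HasGradientAt.hasDerivAt_comp_add_smul {f : E → ℝ} {g x d : E} {s : ℝ}
    (h : HasGradientAt f g (x + s • d)) :
    HasDerivAt (fun s : ℝ => f (x + s • d)) ⟪g, d⟫ s := by
  have hline : HasDerivAt (fun s : ℝ => x + s • d) d s := by
    simpa using ((hasDerivAt_id s).smul_const d).const_add x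
  have := h.hasFDerivAt.comp_hasDerivAt s hline
  simp only [InnerProductSpace.toDual_apply_apply] at this
  exact this

theorem ConvexOn.add_inner_le_of_hasGradientAt {s : Set E} {f : E → ℝ} {g x y : E}
    (hf : ConvexOn ℝ s f) (hx : x ∈ s) (hy : y ∈ s) (hg : HasGradientAt f g x) :
    f x + ⟪g, y - x⟫ ≤ f y := by
  have hline := hf.comp_affineMap (AffineMap.lineMap x y)
  have hcomp : f ∘ AffineMap.lineMap x y = fun t : ℝ => f (x + t • (y - x)) := by
    funext t
    simp [AffineMap.lineMap_apply_module', add_comm]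
  rw [hcomp] at hline
  have hd : HasDerivAt (fun t : ℝ => f (x + t • (y - x))) ⟪g, y - x⟫ 0 :=
    HasGradientAt.hasDerivAt_comp_add_smul (by simpa using hg)
  have := hline.le_slope_of_hasDerivAt (by simpa) (by simpa) zero_lt_one hd
  simp only [slope_def_field, one_smul, zero_smul, add_zero, add_sub_cancel, sub_zero,
    div_one] at this
  linarith

theorem le_add_inner_add_sq_of_lipschitz_gradient {f : E → ℝ} {f' : E → E} {L : ℝ}
    (hf : ∀ x, HasGradientAt f (f' x) x) (hlip : ∀ x y, ‖f' x - f' y‖ ≤ L * ‖x - y‖) (x y : E) :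
    f y ≤ f x + ⟪f' x, y - x⟫ + L / 2 * ‖y - x‖ ^ 2 := by
  set d := y - x
  let g : ℝ → ℝ := fun s => f (x + s • d) - s * ⟪f' x, d⟫ - L / 2 * s ^ 2 * ‖d‖ ^ 2
  have hg : ∀ s, HasDerivAt g (⟪f' (x + s • d), d⟫ - ⟪f' x, d⟫ - L * s * ‖d‖ ^ 2) s := by
    intro s
    have := ((hf (x + s • d)).hasDerivAt_comp_add_smul.sub (hasDerivAt_mul_const ⟪f' x, d⟫)).sub
      (((hasDerivAt_pow 2 s).const_mul (L / 2)).mul_const (‖d‖ ^ 2))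
    exact this.congr_deriv (by push_cast; ring)
  have hg_nonpos : ∀ s ∈ interior (Icc (0 : ℝ) 1),
      ⟪f' (x + s • d), d⟫ - ⟪f' x, d⟫ - L * s * ‖d‖ ^ 2 ≤ 0 := by
    intro s hs
    rw [interior_Icc] at hs
    have hlip_s : ‖f' (x + s • d) - f' x‖ ≤ L * s * ‖d‖ := by
      simpa [norm_smul, abs_of_pos hs.1, mul_assoc] using hlip (x + s • d) x
    refine sub_nonpos.2 ?_
    calc ⟪f' (x + s • d), d⟫ - ⟪f' x, d⟫ = ⟪f' (x + s • d) - f' x, d⟫ := (inner_sub_left ..).symm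
      _ ≤ ‖f' (x + s • d) - f' x‖ * ‖d‖ := real_inner_le_norm _ _
      _ ≤ L * s * ‖d‖ * ‖d‖ := by gcongr
      _ = L * s * ‖d‖ ^ 2 := by ring
  have hanti : AntitoneOn g (Icc 0 1) :=
    antitoneOn_of_hasDerivWithinAt_nonpos (convex_Icc 0 1)
      (fun s _ => (hg s).continuousAt.continuousWithinAt)
      (fun s _ => (hg s).hasDerivWithinAt) hg_nonpos
  have := hanti (left_mem_Icc.2 zero_le_one) (right_mem_Icc.2 zero_le_one) zero_le_one
  norm_num [g, d] at this
  linarith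

theorem apply_sub_smul_gradient_le {f : E → ℝ} {f' : E → E} {L c : ℝ}
    (hf : ∀ x, HasGradientAt f (f' x) x) (hlip : ∀ x y, ‖f' x - f' y‖ ≤ L * ‖x - y‖)
    (hc : 0 ≤ c) (hLc : L * c ≤ 1) (x : E) :
    f (x - c • f' x) ≤ f x - c / 2 * ‖f' x‖ ^ 2 := by
  have h := le_add_inner_add_sq_of_lipschitz_gradient hf hlip x (x - c • f' x)
  rw [sub_sub_cancel_left, inner_neg_right, real_inner_smul_right, real_inner_self_eq_norm_sq,
    norm_neg, norm_smul, Real.norm_of_nonneg hc] at h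
  nlinarith [mul_nonneg (mul_nonneg hc (sub_nonneg.2 hLc)) (sq_nonneg ‖f' x‖)]

theorem accelerated_step_energy_le {f : E → ℝ} {f' : E → E} {L a G : ℝ}
    (hconv : ConvexOn ℝ univ f) (hf : ∀ x, HasGradientAt f (f' x) x)
    (hlip : ∀ x y, ‖f' x - f' y‖ ≤ L * ‖x - y‖)
    (ha : 0 < a) (haG : a ≤ G) (hLa : L * a ^ 2 ≤ G) {x y z yh yh₀ z₀ : E}
    (hy : y = (1 - a / G) • yh₀ + (a / G) • z₀) (hz : z = z₀ - a • f' y)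
    (hyh : yh = (1 - a / G) • yh₀ + (a / G) • z) :
    G * (f yh - f x) + ‖z - x‖ ^ 2 / 2 ≤ (G - a) * (f yh₀ - f x) + ‖z₀ - x‖ ^ 2 / 2 := by
  have hG : 0 < G := ha.trans_le haG
  set g := f' y
  have hdesc : G * f yh ≤ G * f y - a ^ 2 / 2 * ‖g‖ ^ 2 := by
    have hyh_step : yh = y - (a ^ 2 / G) • g := by
      rw [hyh, hz, hy]; module
    have hLc : L * (a ^ 2 / G) ≤ 1 := by
      rwa [← mul_div_assoc, div_le_one hG]
    have := apply_sub_smul_gradient_le hf hlip (by positivity) hLc y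
    rw [← hyh_step] at this
    calc G * f yh ≤ G * (f y - a ^ 2 / G / 2 * ‖g‖ ^ 2) := by gcongr
      _ = G * f y - a ^ 2 / 2 * ‖g‖ ^ 2 := by field_simp
  have hconv₀ := hconv.add_inner_le_of_hasGradientAt (mem_univ y) (mem_univ yh₀) (hf y)
  have hconvₓ := hconv.add_inner_le_of_hasGradientAt (mem_univ y) (mem_univ x) (hf y)
  have hinner : (G - a) * ⟪g, yh₀ - y⟫ + a * ⟪g, x - y⟫ = -(a * ⟪g, z₀ - x⟫) := by
    have hcombo : (G - a) • (yh₀ - y) + a • (x - y) = -(a • (z₀ - x)) := by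
      rw [hy]; match_scalars <;> field_simp <;> ring
    rw [← real_inner_smul_right, ← real_inner_smul_right, ← inner_add_right, hcombo,
      inner_neg_right, real_inner_smul_right]
  have hnorm : ‖z - x‖ ^ 2 = ‖z₀ - x‖ ^ 2 - 2 * (a * ⟪g, z₀ - x⟫) + a ^ 2 * ‖g‖ ^ 2 := by
    rw [show z - x = (z₀ - x) - a • g by rw [hz]; abel, norm_sub_sq_real, real_inner_smul_right,
      real_inner_comm, norm_smul, mul_pow, Real.norm_eq_abs, sq_abs]
  linarith [mul_le_mul_of_nonneg_left hconv₀ (sub_nonneg.2 haG),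
    mul_le_mul_of_nonneg_left hconvₓ ha.le]

end GradientInequalities

theorem step_weight_le_cumulative_weight {γ u : ℝ} (hγ : 0 ≤ γ) (hu : 1 ≤ u) :
    γ * (u + 1) ≤ γ * u * (u + 3) / 2 := by
  nlinarith [mul_nonneg hγ (mul_nonneg (sub_nonneg.2 hu) (by linarith : (0 : ℝ) ≤ u + 2))]

theorem lipschitz_mul_sq_step_weight_le {L γ u : ℝ} (hγ : 0 ≤ γ) (hLγ : 2 * L * γ ≤ 1)
    (hu : 1 ≤ u) : L * (γ * (u + 1)) ^ 2 ≤ γ * u * (u + 3) / 2 := by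
  nlinarith [mul_le_mul_of_nonneg_left hLγ (by positivity : 0 ≤ γ * (u + 1) ^ 2),
    mul_nonneg hγ (sub_nonneg.2 hu)]

theorem accelerated_dual_averaging_rate_general
    {n : ℕ}
    (φ : EuclideanSpace ℝ (Fin n) → ℝ)
    (φ' : EuclideanSpace ℝ (Fin n) → EuclideanSpace ℝ (Fin n))
    (hconv : ConvexOn ℝ Set.univ φ)
    (hgrad : ∀ x, HasGradientAt φ (φ' x) x)
    (L : ℝ) (hL : 0 < L)
    (hlip : ∀ x y, ‖φ' x - φ' y‖ ≤ L * ‖x - y‖)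
    (ystar : EuclideanSpace ℝ (Fin n))
    (γ : ℝ) (hγ : γ = 1 / (2 * L))
    (y z yh : ℕ → EuclideanSpace ℝ (Fin n))
    (hz0 : z 0 = y 0)
    (hy : ∀ t : ℕ, 1 ≤ t →
        y t = (1 - (γ * (t + 1)) / (γ * t * (t + 3) / 2)) • yh (t - 1)
              + ((γ * (t + 1)) / (γ * t * (t + 3) / 2)) • z (t - 1))
    (hz : ∀ t : ℕ, 1 ≤ t → z t = z (t - 1) - (γ * (t + 1)) • φ' (y t))
    (hyh : ∀ t : ℕ, 1 ≤ t →
        yh t = (1 - (γ * (t + 1)) / (γ * t * (t + 3) / 2)) • yh (t - 1)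
              + ((γ * (t + 1)) / (γ * t * (t + 3) / 2)) • z t) :
    ∀ t : ℕ, 2 ≤ t →
      φ (yh t) - φ ystar ≤ 2 * L * ‖y 0 - ystar‖ ^ 2 / (t * (t + 3)) := by
  have hγ₀ : 0 < γ := by rw [hγ]; positivity
  have hLγ : 2 * L * γ ≤ 1 := by rw [hγ, mul_one_div_cancel (by positivity)]
  let energy (t : ℕ) : ℝ :=
    γ * t * (t + 3) / 2 * (φ (yh t) - φ ystar) + ‖z t - ystar‖ ^ 2 / 2
  have henergy : Antitone energy := antitone_nat_of_succ_le fun s => by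
    have hu : (1 : ℝ) ≤ ((s + 1 : ℕ) : ℝ) := by simp
    have key := accelerated_step_energy_le (x := ystar) hconv hgrad hlip (by positivity)
      (step_weight_le_cumulative_weight hγ₀.le hu) (lipschitz_mul_sq_step_weight_le hγ₀.le hLγ hu)
      (hy (s + 1) le_add_self) (hz (s + 1) le_add_self) (hyh (s + 1) le_add_self)
    have hweight : γ * ((s + 1 : ℕ) : ℝ) * ((s + 1 : ℕ) + 3) / 2 - γ * ((s + 1 : ℕ) + 1) =
        γ * s * (s + 3) / 2 := by
      push_cast; ring
    simpa only [Nat.add_sub_cancel, hweight] using key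
  intro t ht
  have htpos : (0 : ℝ) < t := by exact_mod_cast (by omega : 0 < t)
  have hbound := henergy (Nat.zero_le t)
  simp only [energy, hz0, CharP.cast_eq_zero, mul_zero, zero_mul, zero_div, zero_add] at hbound
  rw [le_div_iff₀ (by positivity)]
  calc (φ (yh t) - φ ystar) * (t * (t + 3))
      = 4 * L * (γ * t * (t + 3) / 2 * (φ (yh t) - φ ystar)) := by rw [hγ]; field_simp; ring
    _ ≤ 4 * L * (‖y 0 - ystar‖ ^ 2 / 2) := by gcongr; linarith [sq_nonneg ‖z t - ystar‖]
    _ = 2 * L * ‖y 0 - ystar‖ ^ 2 := by ring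

theorem accelerated_dual_averaging_rate
    {n : ℕ}
    (φ : EuclideanSpace ℝ (Fin n) → ℝ)
    (φ' : EuclideanSpace ℝ (Fin n) → EuclideanSpace ℝ (Fin n))
    (hconv : ConvexOn ℝ Set.univ φ)
    (hgrad : ∀ x, HasGradientAt φ (φ' x) x)
    (L : ℝ) (hL : 0 < L)
    (hlip : ∀ x y, ‖φ' x - φ' y‖ ≤ L * ‖x - y‖)
    (ystar : EuclideanSpace ℝ (Fin n)) (hmin : ∀ y, φ ystar ≤ φ y)
    (γ : ℝ) (hγ : γ = 1 / (2 * L))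
    (y z yh : ℕ → EuclideanSpace ℝ (Fin n))
    (hz0 : z 0 = y 0) (hyh0 : yh 0 = y 0)
    (hy : ∀ t : ℕ, 1 ≤ t →
        y t = (1 - (γ * (t + 1)) / (γ * t * (t + 3) / 2)) • yh (t - 1)
              + ((γ * (t + 1)) / (γ * t * (t + 3) / 2)) • z (t - 1))
    (hz : ∀ t : ℕ, 1 ≤ t → z t = z (t - 1) - (γ * (t + 1)) • φ' (y t))
    (hyh : ∀ t : ℕ, 1 ≤ t →
        yh t = (1 - (γ * (t + 1)) / (γ * t * (t + 3) / 2)) • yh (t - 1)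
              + ((γ * (t + 1)) / (γ * t * (t + 3) / 2)) • z t) :
    ∀ t : ℕ, 2 ≤ t →
      φ (yh t) - φ ystar ≤ 2 * L * ‖y 0 - ystar‖ ^ 2 / (t * (t + 3)) :=
  accelerated_dual_averaging_rate_general φ φ' hconv hgrad L hL hlip ystar γ hγ y z yh hz0 hy hz hyh
end
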